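/- Pointwise L∞ bounds from weighted energy bounds (Lemma 3.1). Fix γ ∈ (0,1), B ≥ 0 with sup|Ψ'| ≤ B, δ, M > 0, an integer k ≥ 0 and t ∈ ℝ. Let φ be smooth on a neighborhood of {t} × ℝ and suppose that for all integers i, j ≥ 0 with i + j ≤ k + 1: ∫_ℝ Λ̄(ū(t,x))·|L L̄^i L^j φ(t,x)|² dx ≤ δ²·M² and ∫_ℝ Λ(t−x)·|L̄ L̄^i L^j φ(t,x)|² dx ≤ M², and that for i + j ≤ k one has Λ̄(ū(t,x))^{1/2}·|L L̄^i L^j φ(t,x)| → 0 as x → +∞ and Λ(t−x)^{1/2}·|L̄ L̄^i L^j φ(t,x)| → 0 as x → −∞. Then there is a constant C = C(γ, B) such that for all i + j ≤ k and all x ∈ ℝ: |L L̄^i L^j φ(t,x)| ≤ C·δ·M·Λ̄(ū(t,x))^{−1/2} and |L̄ L̄^i L^j φ(t,x)| ≤ C·M·Λ(t−x)^{−1/2}. -/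

import Mathlib

/-!
Along a slice `{t} × ℝ` one has `∂ₓ = a L - L̄` with `a = (Ψ'(t - x)² + 1)/2`, and `L`, `L̄` commute
(`L` differentiates along the constant direction `(1, 1)`, along which the coefficients of `L̄` are
constant, so the commutator reduces to the symmetry of the second derivative). Hence the
`x`-derivative of a weighted density `ρ |Z L̄ⁱ Lʲ φ|²` (`Z = L` with `ρ = Λ(ū)`, or `Z = L̄` with
`ρ = Λ(t - x)`) is bounded by weighted densities of order one higher, because `|Λ'| ≤ 2|1 + γ| Λ`
and `|∂ₓū| = a ≤ (B² + 1)/2`. Integrating from `x` towards the end where the density decays bounds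
it pointwise by a multiple of the energy.
-/

open MeasureTheory Filter Set

noncomputable section

/-- partial derivative in the first (time) variable -/
def pd1 (f : ℝ × ℝ → ℝ) (p : ℝ × ℝ) : ℝ := deriv (fun s => f (s, p.2)) p.1

/-- partial derivative in the second (space) variable -/
def pd2 (f : ℝ × ℝ → ℝ) (p : ℝ × ℝ) : ℝ := deriv (fun s => f (p.1, s)) p.2

/-- the Japanese bracket `⟨s⟩ = √(1+s²)` -/
def japb (s : ℝ) : ℝ := Real.sqrt (1 + s^2)

/-- the weight `Λ(s) = Λ̄(s) = ⟨s⟩^{2+2γ}` -/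
def Lam (γ s : ℝ) : ℝ := japb s ^ ((2:ℝ) + 2*γ)

/-- the adapted null coordinate `ū(t,x) = (t+x)/2 − (1/2)∫₀^{t−x}(Ψ'(τ))²dτ` -/
def ubar (Ψ : ℝ → ℝ) (t x : ℝ) : ℝ :=
  (t + x)/2 - (1/2) * ∫ τ in (0:ℝ)..(t - x), (deriv Ψ τ)^2

/-- the null operator `L = ∂_t + ∂_x` (the coordinate vector field `∂_ū`) -/
def Lop (f : ℝ × ℝ → ℝ) : ℝ × ℝ → ℝ := fun p => pd1 f p + pd2 f p

/-- the null operator `L̄ = ((Ψ'(t−x))²+1)/2·∂_t + ((Ψ'(t−x))²−1)/2·∂_x`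
(the coordinate vector field `∂_u`) -/
def Lbar (Ψ : ℝ → ℝ) (f : ℝ × ℝ → ℝ) : ℝ × ℝ → ℝ := fun p =>
  ((deriv Ψ (p.1 - p.2))^2 + 1)/2 * pd1 f p + ((deriv Ψ (p.1 - p.2))^2 - 1)/2 * pd2 f p

open scoped ENNReal

open scoped ContDiff Topology

section Slices

variable {F : Type*} [NormedAddCommGroup F] [NormedSpace ℝ F] {f : ℝ × ℝ → F} {p : ℝ × ℝ}

theorem hasDerivAt_slice_fst (hf : DifferentiableAt ℝ f p) :
    HasDerivAt (fun s => f (s, p.2)) (fderiv ℝ f p (1, 0)) p.1 :=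
  hf.hasFDerivAt.comp_hasDerivAt_of_eq p.1 ((hasDerivAt_id p.1).prodMk (hasDerivAt_const _ _)) rfl

theorem hasDerivAt_slice_snd (hf : DifferentiableAt ℝ f p) :
    HasDerivAt (fun s => f (p.1, s)) (fderiv ℝ f p (0, 1)) p.2 :=
  hf.hasFDerivAt.comp_hasDerivAt_of_eq p.2 ((hasDerivAt_const _ _).prodMk (hasDerivAt_id p.2)) rfl

end Slices

theorem continuous_slice {X : Type*} [TopologicalSpace X] {h : ℝ × ℝ → X} {t : ℝ}
    (hh : ∀ x, ContinuousAt h (t, x)) : Continuous fun x => h (t, x) :=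
  continuous_iff_continuousAt.2 fun x => (hh x).comp (Continuous.prodMk_right t).continuousAt

section

variable {f g : ℝ × ℝ → ℝ} {p : ℝ × ℝ} {Ψ : ℝ → ℝ}

theorem pd1_eq_fderiv (hf : DifferentiableAt ℝ f p) : pd1 f p = fderiv ℝ f p (1, 0) :=
  (hasDerivAt_slice_fst hf).deriv

theorem pd2_eq_fderiv (hf : DifferentiableAt ℝ f p) : pd2 f p = fderiv ℝ f p (0, 1) :=
  (hasDerivAt_slice_snd hf).deriv

theorem Filter.EventuallyEq.pd1_eq (h : f =ᶠ[𝓝 p] g) : pd1 f p = pd1 g p :=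
  (h.comp_tendsto ((Continuous.prodMk_left p.2).tendsto' p.1 p rfl)).deriv_eq

theorem Filter.EventuallyEq.pd2_eq (h : f =ᶠ[𝓝 p] g) : pd2 f p = pd2 g p :=
  (h.comp_tendsto ((Continuous.prodMk_right p.1).tendsto' p.2 p rfl)).deriv_eq

theorem Filter.EventuallyEq.Lop_eq (h : f =ᶠ[𝓝 p] g) : Lop f p = Lop g p := by
  simp only [Lop, h.pd1_eq, h.pd2_eq]

theorem Filter.EventuallyEq.Lbar_eq (h : f =ᶠ[𝓝 p] g) : Lbar Ψ f p = Lbar Ψ g p := by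
  simp only [Lbar, h.pd1_eq, h.pd2_eq]

theorem Filter.EventuallyEq.iterate_Lbar (h : f =ᶠ[𝓝 p] g) (i : ℕ) :
    (Lbar Ψ)^[i] f =ᶠ[𝓝 p] (Lbar Ψ)^[i] g := by
  induction i with
  | zero => exact h
  | succ i ih =>
    simp only [Function.iterate_succ_apply']
    filter_upwards [ih.eventuallyEq_nhds] with q hq using hq.Lbar_eq

def lbarDir (Ψ : ℝ → ℝ) (s : ℝ) : ℝ × ℝ :=
  (((deriv Ψ s)^2 + 1)/2, ((deriv Ψ s)^2 - 1)/2)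

theorem Lop_eq_fderiv (hf : DifferentiableAt ℝ f p) : Lop f p = fderiv ℝ f p (1, 1) := by
  rw [Lop, pd1_eq_fderiv hf, pd2_eq_fderiv hf, ← map_add, Prod.mk_add_mk, add_zero, zero_add]

theorem Lbar_eq_fderiv (hf : DifferentiableAt ℝ f p) :
    Lbar Ψ f p = fderiv ℝ f p (lbarDir Ψ (p.1 - p.2)) := by
  have hdir : lbarDir Ψ (p.1 - p.2) = (((deriv Ψ (p.1 - p.2))^2 + 1)/2) • ((1 : ℝ), (0 : ℝ))
      + (((deriv Ψ (p.1 - p.2))^2 - 1)/2) • ((0 : ℝ), (1 : ℝ)) := by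
    simp [lbarDir]
  rw [Lbar, pd1_eq_fderiv hf, pd2_eq_fderiv hf, hdir, map_add, map_smul, map_smul, smul_eq_mul,
    smul_eq_mul]

theorem hasDerivAt_slice_snd_eq_Lop_sub_Lbar (hf : DifferentiableAt ℝ f p) :
    HasDerivAt (fun s => f (p.1, s))
      (((deriv Ψ (p.1 - p.2))^2 + 1)/2 * Lop f p - Lbar Ψ f p) p.2 := by
  refine (hasDerivAt_slice_snd hf).congr_deriv ?_
  rw [← pd2_eq_fderiv hf, Lop, Lbar]
  ring

theorem ContDiffAt.eventually_differentiableAt {E F : Type*} [NormedAddCommGroup E]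
    [NormedSpace ℝ E] [NormedAddCommGroup F] [NormedSpace ℝ F] {h : E → F} {x : E} {n : ℕ∞}
    (hh : ContDiffAt ℝ n h x) (hn : 1 ≤ n) : ∀ᶠ y in 𝓝 x, DifferentiableAt ℝ h y :=
  ((hh.of_le (by exact_mod_cast hn)).eventually (by simp)).mono
    fun _ hy => hy.differentiableAt one_ne_zero

theorem contDiff_lbarDir (hΨ : ContDiff ℝ ∞ Ψ) {n : ℕ∞} : ContDiff ℝ n (lbarDir Ψ) := by
  have hΨ' : ContDiff ℝ n (deriv Ψ) := (hΨ.deriv' (n := ∞)).of_le (by exact_mod_cast le_top)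
  exact (((hΨ'.pow 2).add contDiff_const).div_const 2).prodMk
    (((hΨ'.pow 2).sub contDiff_const).div_const 2)

theorem ContDiffAt.Lop {m n : ℕ∞} (hf : ContDiffAt ℝ n f p) (hmn : m + 1 ≤ n) :
    ContDiffAt ℝ m (Lop f) p := by
  refine ((hf.fderiv_right (by exact_mod_cast hmn)).clm_apply
    (contDiffAt_const (c := ((1 : ℝ), (1 : ℝ))))).congr_of_eventuallyEq ?_
  filter_upwards [hf.eventually_differentiableAt (le_add_self.trans hmn)] with q hq
  exact Lop_eq_fderiv hq

theorem ContDiffAt.Lbar (hΨ : ContDiff ℝ ∞ Ψ) {m n : ℕ∞} (hf : ContDiffAt ℝ n f p)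
    (hmn : m + 1 ≤ n) : ContDiffAt ℝ m (Lbar Ψ f) p := by
  refine ((hf.fderiv_right (by exact_mod_cast hmn)).clm_apply
      ((contDiff_lbarDir hΨ).comp (contDiff_fst.sub contDiff_snd)).contDiffAt).congr_of_eventuallyEq
    ?_
  filter_upwards [hf.eventually_differentiableAt (le_add_self.trans hmn)] with q hq
  exact Lbar_eq_fderiv hq

theorem contDiffAt_iterate_Lbar_iterate_Lop (hΨ : ContDiff ℝ ∞ Ψ) {φ : ℝ × ℝ → ℝ}
    (hφ : ContDiffAt ℝ ∞ φ p) (i j : ℕ) : ContDiffAt ℝ ∞ ((Lbar Ψ)^[i] (Lop^[j] φ)) p :=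
  Function.Iterate.rec _ (Function.Iterate.rec _ hφ (fun _ h => h.Lop (by simp)) j)
    (fun _ h => h.Lbar hΨ (by simp)) i

theorem fderiv_fderiv_apply_comm {E : Type*} [NormedAddCommGroup E] [NormedSpace ℝ E]
    {h : E → ℝ} {Y : E → E} {x v : E} (hh : ContDiffAt ℝ 2 h x) (hY : DifferentiableAt ℝ Y x)
    (hYv : fderiv ℝ Y x v = 0) :
    fderiv ℝ (fun y => fderiv ℝ h y (Y y)) x v = fderiv ℝ (fun y => fderiv ℝ h y v) x (Y x) := by
  have hd : DifferentiableAt ℝ (fderiv ℝ h) x :=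
    (hh.fderiv_right (m := 1) le_rfl).differentiableAt one_ne_zero
  rw [(hd.hasFDerivAt.clm_apply hY.hasFDerivAt).fderiv,
    (hd.hasFDerivAt.clm_apply (hasFDerivAt_const v x)).fderiv]
  simp [hYv, hh.isSymmSndFDerivAt (by simp) v (Y x)]

theorem fderiv_lbarDir_sub_one_one (hΨ : ContDiff ℝ ∞ Ψ) :
    fderiv ℝ (fun q : ℝ × ℝ => lbarDir Ψ (q.1 - q.2)) p (1, 1) = 0 := by
  have hY : HasFDerivAt (fun q : ℝ × ℝ => lbarDir Ψ (q.1 - q.2)) _ p :=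
    ((contDiff_lbarDir hΨ (n := 1)).differentiable one_ne_zero _).hasFDerivAt.comp p
      (hasFDerivAt_fst.sub hasFDerivAt_snd)
  rw [hY.fderiv]
  simp

theorem Lop_Lbar_comm (hΨ : ContDiff ℝ ∞ Ψ) (hf : ContDiffAt ℝ 2 f p) :
    Lop (Lbar Ψ f) p = Lbar Ψ (Lop f) p := by
  have hdiff := hf.eventually_differentiableAt (by norm_num)
  have hLbar : Lbar Ψ f =ᶠ[𝓝 p] fun q => fderiv ℝ f q (lbarDir Ψ (q.1 - q.2)) := by
    filter_upwards [hdiff] with q hq using Lbar_eq_fderiv hq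
  have hLop : Lop f =ᶠ[𝓝 p] fun q => fderiv ℝ f q (1, 1) := by
    filter_upwards [hdiff] with q hq using Lop_eq_fderiv hq
  rw [Lop_eq_fderiv ((hf.Lbar hΨ (m := 1) le_rfl).differentiableAt one_ne_zero),
    Lbar_eq_fderiv ((hf.Lop (m := 1) le_rfl).differentiableAt one_ne_zero), hLbar.fderiv_eq,
    hLop.fderiv_eq]
  exact fderiv_fderiv_apply_comm hf
    (((contDiff_lbarDir hΨ (n := 1)).comp (contDiff_fst.sub contDiff_snd)).differentiable
      one_ne_zero p) (fderiv_lbarDir_sub_one_one hΨ)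

theorem Lop_iterate_Lbar_eventuallyEq (hΨ : ContDiff ℝ ∞ Ψ) (i : ℕ) :
    ∀ {g : ℝ × ℝ → ℝ}, ContDiffAt ℝ ∞ g p → Lop ((Lbar Ψ)^[i] g) =ᶠ[𝓝 p] (Lbar Ψ)^[i] (Lop g) := by
  induction i with
  | zero => exact fun _ => .rfl
  | succ i ih =>
    intro g hg
    have hcomm : Lop (Lbar Ψ g) =ᶠ[𝓝 p] Lbar Ψ (Lop g) := by
      filter_upwards [((hg.of_le (m := 2) ENat.LEInfty.out).eventually (by simp))] with q hq
      exact Lop_Lbar_comm hΨ hq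
    simp only [Function.iterate_succ_apply]
    exact (ih (hg.Lbar hΨ (by simp))).trans (hcomm.iterate_Lbar i)

theorem Lam_eq_rpow (γ s : ℝ) : Lam γ s = (1 + s^2) ^ (1 + γ) := by
  rw [Lam, japb, Real.sqrt_eq_rpow, ← Real.rpow_mul (by positivity)]
  ring_nf

theorem Lam_pos (γ s : ℝ) : 0 < Lam γ s := by
  rw [Lam_eq_rpow]; positivity

theorem hasDerivAt_Lam (γ s : ℝ) :
    HasDerivAt (Lam γ) ((2 + 2 * γ) * s * (1 + s^2) ^ γ) s := by
  have h := (Real.hasDerivAt_rpow_const (p := 1 + γ) (Or.inl (by positivity : 1 + s^2 ≠ 0))).comp s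
    ((hasDerivAt_pow 2 s).const_add 1)
  rw [show Lam γ = fun u => (1 + u^2) ^ (1 + γ) from funext (Lam_eq_rpow γ)]
  refine h.congr_deriv ?_
  rw [add_sub_cancel_left]
  push_cast
  ring

theorem abs_deriv_Lam_le (γ s : ℝ) : |deriv (Lam γ) s| ≤ 2 * |1 + γ| * Lam γ s := by
  have hs : |s| ≤ 1 + s^2 := by nlinarith [abs_nonneg s, sq_abs s]
  rw [(hasDerivAt_Lam γ s).deriv, Lam_eq_rpow, Real.rpow_add (by positivity), Real.rpow_one,
    abs_mul, abs_mul, abs_of_pos (Real.rpow_pos_of_pos (by positivity) γ),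
    show 2 + 2 * γ = 2 * (1 + γ) by ring, abs_mul, abs_two, mul_assoc]
  gcongr

theorem hasDerivAt_ubar (hΨ : Continuous (deriv Ψ)) (t x : ℝ) :
    HasDerivAt (ubar Ψ t) (((deriv Ψ (t - x))^2 + 1)/2) x := by
  have hI := ((hΨ.pow 2).integral_hasStrictDerivAt 0 (t - x)).hasDerivAt.comp x
    ((hasDerivAt_id x).const_sub t)
  have h : HasDerivAt (ubar Ψ t) (1/2 - 1/2 * ((deriv Ψ ^ 2) (t - x) * -1)) x :=
    ((hasDerivAt_id x).const_add t).div_const 2 |>.sub (hI.const_mul (1/2))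
  refine h.congr_deriv ?_
  rw [Pi.pow_apply]
  ring

theorem abs_sq_add_one_div_two_le {y B : ℝ} (hy : |y| ≤ B) : |(y^2 + 1)/2| ≤ (B^2 + 1)/2 := by
  rw [abs_of_nonneg (by positivity)]
  nlinarith [sq_abs y, abs_nonneg y]

theorem integrable_and_integral_le_of_lintegral_ofReal_le {α : Type*} [MeasurableSpace α]
    {μ : Measure α} {v : α → ℝ} {E : ℝ} (hE : 0 ≤ E) (hv : AEStronglyMeasurable v μ)
    (hv0 : 0 ≤ᵐ[μ] v) (h : ∫⁻ x, ENNReal.ofReal (v x) ∂μ ≤ ENNReal.ofReal E) :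
    Integrable v μ ∧ ∫ x, v x ∂μ ≤ E := by
  refine ⟨⟨hv, (hasFiniteIntegral_iff_ofReal hv0).2 (h.trans_lt ENNReal.ofReal_lt_top)⟩, ?_⟩
  rw [integral_eq_lintegral_of_nonneg_ae hv0 hv]
  exact ENNReal.toReal_le_of_le_ofReal hE h

theorem abs_le_integral_abs_of_hasDerivAt_of_tendsto {F F' : ℝ → ℝ}
    (hF : ∀ x, HasDerivAt F (F' x) x) (hF' : Integrable F')
    (hlim : Tendsto F atTop (𝓝 0) ∨ Tendsto F atBot (𝓝 0)) (x : ℝ) :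
    |F x| ≤ ∫ y, |F' y| := by
  have hnn : 0 ≤ᵐ[volume] fun y => |F' y| := .of_forall fun _ => abs_nonneg _
  rcases hlim with hlim | hlim
  · have h :=
      integral_Ioi_of_hasDerivAt_of_tendsto' (a := x) (fun y _ => hF y) hF'.integrableOn hlim
    calc |F x| = |∫ y in Ioi x, F' y| := by rw [h, zero_sub, abs_neg]
      _ ≤ ∫ y in Ioi x, |F' y| := abs_integral_le_integral_abs
      _ ≤ ∫ y, |F' y| := setIntegral_le_integral hF'.abs hnn
  · have h :=
      integral_Iic_of_hasDerivAt_of_tendsto' (a := x) (fun y _ => hF y) hF'.integrableOn hlim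
    calc |F x| = |∫ y in Iic x, F' y| := by rw [h, sub_zero]
      _ ≤ ∫ y in Iic x, |F' y| := abs_integral_le_integral_abs
      _ ≤ ∫ y, |F' y| := setIntegral_le_integral hF'.abs hnn

theorem abs_two_mul_mul_sub_le {w p q a A : ℝ} (ha : |a| ≤ A) :
    |2 * w * (a * p - q)| ≤ A * (w^2 + p^2) + (w^2 + q^2) := by
  have hwp : |2 * w * p| ≤ w^2 + p^2 := abs_le.2 ⟨by nlinarith [sq_nonneg (w + p)],
    by nlinarith [sq_nonneg (w - p)]⟩
  have hwq : |2 * w * q| ≤ w^2 + q^2 := abs_le.2 ⟨by nlinarith [sq_nonneg (w + q)],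
    by nlinarith [sq_nonneg (w - q)]⟩
  calc |2 * w * (a * p - q)| = |a * (2 * w * p) - 2 * w * q| := by ring_nf
    _ ≤ |a| * |2 * w * p| + |2 * w * q| := by rw [← abs_mul]; exact abs_sub _ _
    _ ≤ A * (w^2 + p^2) + (w^2 + q^2) := by gcongr; exact (abs_nonneg a).trans ha

theorem abs_le_mul_inv_sqrt_of_mul_sq_le {ρ w K D : ℝ} (hρ : 0 < ρ) (hD : 0 ≤ D)
    (h : ρ * w ^ 2 ≤ K * D ^ 2) : |w| ≤ √K * D * (√ρ)⁻¹ := by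
  rw [le_mul_inv_iff₀ (Real.sqrt_pos.2 hρ), mul_comm]
  simpa [Real.sqrt_mul hρ.le, Real.sqrt_sq_eq_abs, Real.sqrt_mul' K (sq_nonneg D),
    Real.sqrt_sq hD] using Real.sqrt_le_sqrt h

theorem mul_sq_le_of_lintegral_mul_sq_le {ρ ρ' W P Q a : ℝ → ℝ} {c A E : ℝ} (hc : 0 ≤ c)
    (hE : 0 ≤ E) (hρ : ∀ x, HasDerivAt ρ (ρ' x) x) (hρ0 : ∀ x, 0 ≤ ρ x)
    (hρ' : ∀ x, |ρ' x| ≤ c * ρ x) (hW : ∀ x, HasDerivAt W (a x * P x - Q x) x)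
    (ha : ∀ x, |a x| ≤ A) (hP : Measurable P) (hQ : Measurable Q)
    (hEW : ∫⁻ x, ENNReal.ofReal (ρ x * W x ^ 2) ≤ ENNReal.ofReal E)
    (hEP : ∫⁻ x, ENNReal.ofReal (ρ x * P x ^ 2) ≤ ENNReal.ofReal E)
    (hEQ : ∫⁻ x, ENNReal.ofReal (ρ x * Q x ^ 2) ≤ ENNReal.ofReal E)
    (hlim : Tendsto (fun x => √(ρ x) * |W x|) atTop (𝓝 0) ∨
      Tendsto (fun x => √(ρ x) * |W x|) atBot (𝓝 0)) (x : ℝ) :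
    ρ x * W x ^ 2 ≤ (c + 2 * A + 2) * E := by
  have hρc : Continuous ρ := continuous_iff_continuousAt.2 fun x => (hρ x).continuousAt
  have hWc : Continuous W := continuous_iff_continuousAt.2 fun x => (hW x).continuousAt
  have energy : ∀ V : ℝ → ℝ, Measurable V →
      ∫⁻ x, ENNReal.ofReal (ρ x * V x ^ 2) ≤ ENNReal.ofReal E →
      Integrable (fun x => ρ x * V x ^ 2) ∧ ∫ x, ρ x * V x ^ 2 ≤ E := fun V hV =>
    integrable_and_integral_le_of_lintegral_ofReal_le hE
      (hρc.measurable.mul (hV.pow_const 2)).aestronglyMeasurable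
      (.of_forall fun x => mul_nonneg (hρ0 x) (sq_nonneg _))
  obtain ⟨hIW, hEW⟩ := energy W hWc.measurable hEW
  obtain ⟨hIP, hEP⟩ := energy P hP hEP
  obtain ⟨hIQ, hEQ⟩ := energy Q hQ hEQ
  have hA : 0 ≤ A := (abs_nonneg _).trans (ha 0)
  set F' := fun x => ρ' x * W x ^ 2 + ρ x * (2 * W x * (a x * P x - Q x))
  set D := fun x => (c + A + 1) * (ρ x * W x ^ 2) + A * (ρ x * P x ^ 2) + ρ x * Q x ^ 2
  have hF : ∀ x, HasDerivAt (fun x => ρ x * W x ^ 2) (F' x) x := fun x => by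
    refine ((hρ x).mul ((hW x).pow 2)).congr_deriv ?_
    simp only [F', Pi.pow_apply]
    push_cast
    ring
  have hF'D : ∀ x, |F' x| ≤ D x := fun x => by
    calc |F' x| ≤ |ρ' x * W x ^ 2| + |ρ x * (2 * W x * (a x * P x - Q x))| := abs_add_le _ _
      _ ≤ c * ρ x * W x ^ 2 + ρ x * (A * (W x ^ 2 + P x ^ 2) + (W x ^ 2 + Q x ^ 2)) := by
        rw [abs_mul, abs_mul, abs_of_nonneg (hρ0 x), abs_of_nonneg (sq_nonneg (W x))]
        gcongr
        · exact hρ' x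
        · exact hρ0 x
        · exact abs_two_mul_mul_sub_le (ha x)
      _ = D x := by ring
  have hD : Integrable D := ((hIW.const_mul _).add (hIP.const_mul _)).add hIQ
  have hF'm : Measurable F' := by
    rw [show F' = deriv (fun x => ρ x * W x ^ 2) from funext fun x => (hF x).deriv.symm]
    exact measurable_deriv _
  have hF'int : Integrable F' :=
    hD.mono' hF'm.aestronglyMeasurable (.of_forall fun x => (Real.norm_eq_abs _).trans_le (hF'D x))
  have hFlim : Tendsto (fun x => ρ x * W x ^ 2) atTop (𝓝 0) ∨
      Tendsto (fun x => ρ x * W x ^ 2) atBot (𝓝 0) := by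
    have hsq : (fun x => ρ x * W x ^ 2) = fun x => (√(ρ x) * |W x|) ^ 2 :=
      funext fun x => by rw [mul_pow, Real.sq_sqrt (hρ0 x), sq_abs]
    rw [hsq]
    exact hlim.imp (fun h => by simpa using h.pow 2) (fun h => by simpa using h.pow 2)
  calc ρ x * W x ^ 2 ≤ |ρ x * W x ^ 2| := le_abs_self _
    _ ≤ ∫ y, |F' y| := abs_le_integral_abs_of_hasDerivAt_of_tendsto hF hF'int hFlim x
    _ ≤ ∫ y, D y := integral_mono hF'int.abs hD hF'D
    _ = (c + A + 1) * (∫ y, ρ y * W y ^ 2) + A * (∫ y, ρ y * P y ^ 2) + ∫ y, ρ y * Q y ^ 2 := by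
      have hIWP : Integrable fun y => (c + A + 1) * (ρ y * W y ^ 2) + A * (ρ y * P y ^ 2) :=
        (hIW.const_mul _).add (hIP.const_mul _)
      rw [integral_add hIWP hIQ, integral_add (hIW.const_mul _) (hIP.const_mul _),
        integral_const_mul, integral_const_mul]
    _ ≤ (c + A + 1) * E + A * E + E := by gcongr
    _ = (c + 2 * A + 2) * E := by ring

theorem Lam_ubar_mul_sq_Lop_le {γ B E t : ℝ} {φ : ℝ × ℝ → ℝ} (hΨ : ContDiff ℝ ∞ Ψ)
    (hB : ∀ s, |deriv Ψ s| ≤ B) (hφ : ∀ x, ContDiffAt ℝ ∞ φ (t, x)) {i j : ℕ} (hE : 0 ≤ E)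
    (h₀ : ∫⁻ x, ENNReal.ofReal
      (Lam γ (ubar Ψ t x) * (Lop ((Lbar Ψ)^[i] (Lop^[j] φ)) (t, x))^2) ≤ ENNReal.ofReal E)
    (h₁ : ∫⁻ x, ENNReal.ofReal
      (Lam γ (ubar Ψ t x) * (Lop ((Lbar Ψ)^[i] (Lop^[j + 1] φ)) (t, x))^2) ≤ ENNReal.ofReal E)
    (h₂ : ∫⁻ x, ENNReal.ofReal
      (Lam γ (ubar Ψ t x) * (Lop ((Lbar Ψ)^[i + 1] (Lop^[j] φ)) (t, x))^2) ≤ ENNReal.ofReal E)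
    (hlim : Tendsto (fun x => √(Lam γ (ubar Ψ t x)) * |Lop ((Lbar Ψ)^[i] (Lop^[j] φ)) (t, x)|)
      atTop (𝓝 0)) (x : ℝ) :
    Lam γ (ubar Ψ t x) * (Lop ((Lbar Ψ)^[i] (Lop^[j] φ)) (t, x))^2
      ≤ (|1 + γ| + 1) * (B^2 + 3) * E := by
  have hsmooth : ∀ i j x, ContDiffAt ℝ ∞ ((Lbar Ψ)^[i] (Lop^[j] φ)) (t, x) :=
    fun i j x => contDiffAt_iterate_Lbar_iterate_Lop hΨ (hφ x) i j
  have hmeas : ∀ i j, Measurable fun x => Lop ((Lbar Ψ)^[i] (Lop^[j] φ)) (t, x) := fun i j =>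
    (continuous_slice fun x => ((hsmooth i j x).Lop (m := ⊤) (by simp)).continuousAt).measurable
  have hW : ∀ x, HasDerivAt (fun y => Lop ((Lbar Ψ)^[i] (Lop^[j] φ)) (t, y))
      (((deriv Ψ (t - x))^2 + 1)/2 * Lop ((Lbar Ψ)^[i] (Lop^[j + 1] φ)) (t, x)
        - Lop ((Lbar Ψ)^[i + 1] (Lop^[j] φ)) (t, x)) x := fun x => by
    have h := hasDerivAt_slice_snd_eq_Lop_sub_Lbar (Ψ := Ψ) (p := (t, x))
      (((hsmooth i j x).Lop (m := 1) (by simp)).differentiableAt one_ne_zero)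
    rwa [(Lop_iterate_Lbar_eventuallyEq hΨ i (g := Lop^[j] φ) (hsmooth 0 j x)).Lop_eq,
      ← Lop_Lbar_comm hΨ ((hsmooth i j x).of_le ENat.LEInfty.out),
      ← Function.iterate_succ_apply' Lop, ← Function.iterate_succ_apply' (Lbar Ψ)] at h
  have hρ : ∀ x, HasDerivAt (fun y => Lam γ (ubar Ψ t y))
      (deriv (Lam γ) (ubar Ψ t x) * (((deriv Ψ (t - x))^2 + 1)/2)) x := fun x =>
    (hasDerivAt_Lam γ _).differentiableAt.hasDerivAt.comp x
      (hasDerivAt_ubar (hΨ.continuous_deriv (by simp)) t x)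
  have hρ' : ∀ x, |deriv (Lam γ) (ubar Ψ t x) * (((deriv Ψ (t - x))^2 + 1)/2)|
      ≤ 2 * |1 + γ| * ((B^2 + 1)/2) * Lam γ (ubar Ψ t x) := fun x => by
    rw [abs_mul, mul_right_comm]
    exact mul_le_mul (abs_deriv_Lam_le γ _) (abs_sq_add_one_div_two_le (hB _)) (abs_nonneg _)
      (by positivity [Lam_pos γ (ubar Ψ t x)])
  refine (mul_sq_le_of_lintegral_mul_sq_le (by positivity) hE hρ (fun x => (Lam_pos γ _).le) hρ' hW
    (fun x => abs_sq_add_one_div_two_le (hB _)) (hmeas i (j + 1)) (hmeas (i + 1) j) h₀ h₁ h₂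
    (.inl hlim) x).trans (mul_le_mul_of_nonneg_right ?_ hE)
  nlinarith [abs_nonneg (1 + γ), sq_nonneg B]

theorem Lam_mul_sq_Lbar_le {γ B E t : ℝ} {φ : ℝ × ℝ → ℝ} (hΨ : ContDiff ℝ ∞ Ψ)
    (hB : ∀ s, |deriv Ψ s| ≤ B) (hφ : ∀ x, ContDiffAt ℝ ∞ φ (t, x)) {i j : ℕ} (hE : 0 ≤ E)
    (h₀ : ∫⁻ x, ENNReal.ofReal
      (Lam γ (t - x) * (Lbar Ψ ((Lbar Ψ)^[i] (Lop^[j] φ)) (t, x))^2) ≤ ENNReal.ofReal E)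
    (h₁ : ∫⁻ x, ENNReal.ofReal
      (Lam γ (t - x) * (Lbar Ψ ((Lbar Ψ)^[i] (Lop^[j + 1] φ)) (t, x))^2) ≤ ENNReal.ofReal E)
    (h₂ : ∫⁻ x, ENNReal.ofReal
      (Lam γ (t - x) * (Lbar Ψ ((Lbar Ψ)^[i + 1] (Lop^[j] φ)) (t, x))^2) ≤ ENNReal.ofReal E)
    (hlim : Tendsto (fun x => √(Lam γ (t - x)) * |Lbar Ψ ((Lbar Ψ)^[i] (Lop^[j] φ)) (t, x)|)
      atBot (𝓝 0)) (x : ℝ) :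
    Lam γ (t - x) * (Lbar Ψ ((Lbar Ψ)^[i] (Lop^[j] φ)) (t, x))^2
      ≤ (|1 + γ| + 1) * (B^2 + 3) * E := by
  have hsmooth : ∀ i j x, ContDiffAt ℝ ∞ ((Lbar Ψ)^[i] (Lop^[j] φ)) (t, x) :=
    fun i j x => contDiffAt_iterate_Lbar_iterate_Lop hΨ (hφ x) i j
  have hmeas : ∀ i j, Measurable fun x => Lbar Ψ ((Lbar Ψ)^[i] (Lop^[j] φ)) (t, x) := fun i j =>
    (continuous_slice fun x => ((hsmooth i j x).Lbar hΨ (m := ⊤) (by simp)).continuousAt).measurable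
  have hW : ∀ x, HasDerivAt (fun y => Lbar Ψ ((Lbar Ψ)^[i] (Lop^[j] φ)) (t, y))
      (((deriv Ψ (t - x))^2 + 1)/2 * Lbar Ψ ((Lbar Ψ)^[i] (Lop^[j + 1] φ)) (t, x)
        - Lbar Ψ ((Lbar Ψ)^[i + 1] (Lop^[j] φ)) (t, x)) x := fun x => by
    have h := hasDerivAt_slice_snd_eq_Lop_sub_Lbar (Ψ := Ψ) (p := (t, x))
      (((hsmooth i j x).Lbar hΨ (m := 1) (by simp)).differentiableAt one_ne_zero)
    rw [Lop_Lbar_comm hΨ ((hsmooth i j x).of_le ENat.LEInfty.out),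
      (Lop_iterate_Lbar_eventuallyEq hΨ i (g := Lop^[j] φ) (hsmooth 0 j x)).Lbar_eq,
      ← Function.iterate_succ_apply' Lop] at h
    rwa [Function.iterate_succ_apply' (Lbar Ψ)]
  have hρ : ∀ x, HasDerivAt (fun y => Lam γ (t - y)) (-deriv (Lam γ) (t - x)) x := fun x =>
    ((hasDerivAt_Lam γ _).differentiableAt.hasDerivAt.comp x
      ((hasDerivAt_id x).const_sub t)).congr_deriv (mul_neg_one _)
  have hρ' : ∀ x, |-deriv (Lam γ) (t - x)| ≤ 2 * |1 + γ| * Lam γ (t - x) := fun x =>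
    (abs_neg _).trans_le (abs_deriv_Lam_le γ _)
  refine (mul_sq_le_of_lintegral_mul_sq_le (by positivity) hE hρ (fun x => (Lam_pos γ _).le) hρ' hW
    (fun x => abs_sq_add_one_div_two_le (hB _)) (hmeas i (j + 1)) (hmeas (i + 1) j) h₀ h₁ h₂
    (.inr hlim) x).trans (mul_le_mul_of_nonneg_right ?_ hE)
  nlinarith [abs_nonneg (1 + γ), mul_nonneg (abs_nonneg (1 + γ)) (sq_nonneg B)]

end

theorem pointwise_bounds_from_energies_general
    (γ : ℝ) (B : ℝ) :
    ∃ C : ℝ, 0 < C ∧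
      ∀ (Ψ : ℝ → ℝ), ContDiff ℝ (⊤ : ℕ∞) Ψ → (∀ s : ℝ, |deriv Ψ s| ≤ B) →
      ∀ (δ M : ℝ), 0 < δ → 0 < M →
      ∀ (k : ℕ) (t : ℝ) (φ : ℝ × ℝ → ℝ),
        (∀ x : ℝ, ContDiffAt ℝ (⊤ : ℕ∞) φ (t, x)) →
        (∀ i j : ℕ, i + j ≤ k + 1 →
          (∫⁻ x : ℝ, ENNReal.ofReal
              (Lam γ (ubar Ψ t x) * (Lop ((Lbar Ψ)^[i] (Lop^[j] φ)) (t, x))^2)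
            ≤ ENNReal.ofReal (δ^2 * M^2)) ∧
          (∫⁻ x : ℝ, ENNReal.ofReal
              (Lam γ (t - x) * (Lbar Ψ ((Lbar Ψ)^[i] (Lop^[j] φ)) (t, x))^2)
            ≤ ENNReal.ofReal (M^2))) →
        (∀ i j : ℕ, i + j ≤ k →
          Tendsto (fun x => Real.sqrt (Lam γ (ubar Ψ t x))
              * |Lop ((Lbar Ψ)^[i] (Lop^[j] φ)) (t, x)|) atTop (nhds 0) ∧
          Tendsto (fun x => Real.sqrt (Lam γ (t - x))
              * |Lbar Ψ ((Lbar Ψ)^[i] (Lop^[j] φ)) (t, x)|) atBot (nhds 0)) →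
        ∀ i j : ℕ, i + j ≤ k → ∀ x : ℝ,
          |Lop ((Lbar Ψ)^[i] (Lop^[j] φ)) (t, x)|
              ≤ C * δ * M * (Real.sqrt (Lam γ (ubar Ψ t x)))⁻¹ ∧
          |Lbar Ψ ((Lbar Ψ)^[i] (Lop^[j] φ)) (t, x)|
              ≤ C * M * (Real.sqrt (Lam γ (t - x)))⁻¹ := by
  refine ⟨√((|1 + γ| + 1) * (B^2 + 3)), by positivity, ?_⟩
  intro Ψ hΨ hB δ M hδ hM k t φ hφ hE hlim i j hij x
  obtain ⟨hL₀, hLbar₀⟩ := hE i j (by omega)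
  obtain ⟨hL₁, hLbar₁⟩ := hE i (j + 1) (by omega)
  obtain ⟨hL₂, hLbar₂⟩ := hE (i + 1) j (by omega)
  have hLop := Lam_ubar_mul_sq_Lop_le hΨ hB hφ (by positivity) hL₀ hL₁ hL₂ (hlim i j hij).1 x
  have hLbar := Lam_mul_sq_Lbar_le hΨ hB hφ (by positivity) hLbar₀ hLbar₁ hLbar₂ (hlim i j hij).2 x
  rw [← mul_pow] at hLop
  refine ⟨?_, abs_le_mul_inv_sqrt_of_mul_sq_le (Lam_pos γ _) hM.le hLbar⟩
  simpa only [mul_assoc] using abs_le_mul_inv_sqrt_of_mul_sq_le (Lam_pos γ _) (by positivity) hLop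

/-- **Pointwise `L^∞` bounds from weighted energy bounds (Lemma 3.1).**
Fix `γ ∈ (0,1)` and `B ≥ 0`.  There is `C = C(γ,B)` such that for every smooth `Ψ` with
`sup|Ψ'| ≤ B`, all `δ, M > 0`, every `k`, every time `t`, and every `φ` smooth near
`{t} × ℝ` whose weighted energies of order `≤ k+1` are bounded by `δ²M²` (resp. `M²`) and
whose weighted derivatives decay at spatial infinity, one has for all `i + j ≤ k`:
`|L L̄^i L^j φ(t,x)| ≤ C·δ·M·Λ̄(ū(t,x))^{−1/2}` and
`|L̄ L̄^i L^j φ(t,x)| ≤ C·M·Λ(t−x)^{−1/2}`. -/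
theorem pointwise_bounds_from_energies
    (γ : ℝ) (hγ0 : 0 < γ) (hγ1 : γ < 1) (B : ℝ) (hB : 0 ≤ B) :
    ∃ C : ℝ, 0 < C ∧
      ∀ (Ψ : ℝ → ℝ), ContDiff ℝ (⊤ : ℕ∞) Ψ → (∀ s : ℝ, |deriv Ψ s| ≤ B) →
      ∀ (δ M : ℝ), 0 < δ → 0 < M →
      ∀ (k : ℕ) (t : ℝ) (φ : ℝ × ℝ → ℝ),
        (∀ x : ℝ, ContDiffAt ℝ (⊤ : ℕ∞) φ (t, x)) →
        (∀ i j : ℕ, i + j ≤ k + 1 →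
          (∫⁻ x : ℝ, ENNReal.ofReal
              (Lam γ (ubar Ψ t x) * (Lop ((Lbar Ψ)^[i] (Lop^[j] φ)) (t, x))^2)
            ≤ ENNReal.ofReal (δ^2 * M^2)) ∧
          (∫⁻ x : ℝ, ENNReal.ofReal
              (Lam γ (t - x) * (Lbar Ψ ((Lbar Ψ)^[i] (Lop^[j] φ)) (t, x))^2)
            ≤ ENNReal.ofReal (M^2))) →
        (∀ i j : ℕ, i + j ≤ k →
          Tendsto (fun x => Real.sqrt (Lam γ (ubar Ψ t x))
              * |Lop ((Lbar Ψ)^[i] (Lop^[j] φ)) (t, x)|) atTop (nhds 0) ∧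
          Tendsto (fun x => Real.sqrt (Lam γ (t - x))
              * |Lbar Ψ ((Lbar Ψ)^[i] (Lop^[j] φ)) (t, x)|) atBot (nhds 0)) →
        ∀ i j : ℕ, i + j ≤ k → ∀ x : ℝ,
          |Lop ((Lbar Ψ)^[i] (Lop^[j] φ)) (t, x)|
              ≤ C * δ * M * (Real.sqrt (Lam γ (ubar Ψ t x)))⁻¹ ∧
          |Lbar Ψ ((Lbar Ψ)^[i] (Lop^[j] φ)) (t, x)|
              ≤ C * M * (Real.sqrt (Lam γ (t - x)))⁻¹ :=
  pointwise_bounds_from_energies_general γ B
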